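/- arXiv:2301.02421 — 2 statements merged into one kernel-verified Lean document; each statement's English description precedes it below -/
import Mathlib

section
/- Let G be a digraph, s, t vertices with dist_G(s,t) < ∞, and let P be a simple directed s-to-t path with length(P) > dist_G(s,t). Let p be the smallest natural number such that at least two distinct vertices u of P satisfy dist_G(s,u) = p, and let x be the first vertex of P (in order along P) with dist_G(s,x) = p. Then the prefix subpath P[s→x] has length exactly p; that is, P[s→x] is a shortest s-to-x path in G. -/
/-!
Every vertex of `P` before `x` lies in a layer below `p`: the distance from `s` is `0` at `s`,
grows by at most one along each arc, and `x` is the first vertex of `P` in layer `p`. By the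
minimality of `p` these vertices lie in pairwise different layers, so there are at most `p` of
them and `P[s→x]` has length at most `p`; being an `s`-`x` walk, it has length at least
`dist(s, x) = p`.
-/

variable {V : Type*}

/-- `w` is a directed walk from `u` to `v` in the digraph with arc relation `A`:
a nonempty list of vertices whose consecutive members are joined by arcs,
starting at `u` and ending at `v`. -/
def IsDiWalk (A : V → V → Prop) (u v : V) (w : List V) : Prop :=
  w.Chain' A ∧ w.head? = some u ∧ w.getLast? = some v

/-- The length (number of arcs) of a walk represented as its list of vertices. -/
def walkLength (w : List V) : ℕ :=
  w.length - 1

/-- `w` is a simple directed path from `u` to `v`. -/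
def IsDiPath (A : V → V → Prop) (u v : V) (w : List V) : Prop :=
  IsDiWalk A u v w ∧ w.Nodup

/-- Directed distance from `u` to `v`: the minimum length of a directed
`u`-to-`v` walk, or `⊤` if `v` is unreachable from `u`. -/
noncomputable def ddist (A : V → V → Prop) (u v : V) : ℕ∞ :=
  ⨅ (w : List V) (_ : IsDiWalk A u v w), (walkLength w : ℕ∞)

/-- The internal (non-endpoint) vertices of a path represented as a list. -/
def internalVerts (w : List V) : List V :=
  w.tail.dropLast

/-- Two paths are internally vertex-disjoint if no internal vertex of either
lies on the other. -/
def InternallyDisjoint (w₁ w₂ : List V) : Prop :=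
  (∀ a ∈ internalVerts w₁, a ∉ w₂) ∧ (∀ a ∈ internalVerts w₂, a ∉ w₁)

/-- All vertices of `w` lie in the induced subgraph `G_{≥p}` (with respect to
source `s`), i.e. have distance at least `p` from `s`. A path satisfying
`IsDiPath A x y w` together with `InGeq A s p w` is exactly a path of the
induced subgraph of `G` on `{v : dist_G(s,v) ≥ p}`. -/
def InGeq (A : V → V → Prop) (s : V) (p : ℕ) (w : List V) : Prop :=
  ∀ a ∈ w, (p : ℕ∞) ≤ ddist A s a

theorem List.IsChain.forall_lt_of_forall_ne {α : Type*} {r : α → α → Prop} {f : α → ℕ∞}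
    {n : ℕ∞} {l : List α} (hl : l.IsChain r) (hstep : ∀ a b, r a b → f b ≤ f a + 1)
    (hhead : ∀ a ∈ l.head?, f a < n) (hne : ∀ a ∈ l, f a ≠ n) : ∀ a ∈ l, f a < n := by
  induction l with
  | nil => simp
  | cons a l ih =>
    obtain ⟨hra, hl⟩ := List.isChain_cons.1 hl
    have ha : f a < n := hhead a rfl
    have hl_head : ∀ b ∈ l.head?, f b < n := fun b hb =>
      ((hstep a b (hra b hb)).trans (Order.add_one_le_of_lt ha)).lt_of_ne
        (hne b (List.mem_cons_of_mem a (List.mem_of_mem_head? hb)))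
    have := ih hl hl_head fun b hb => hne b (List.mem_cons_of_mem a hb)
    simpa [ha] using this

theorem List.length_le_of_injOn_of_lt {α : Type*} {f : α → ℕ∞} {n : ℕ} {l : List α}
    (hl : l.Nodup) (hinj : Set.InjOn f {a | a ∈ l}) (hlt : ∀ a ∈ l, f a < n) :
    l.length ≤ n := by
  classical
  have hmaps : Set.MapsTo f ↑l.toFinset ↑((Finset.range n).image ((↑) : ℕ → ℕ∞)) := by
    intro a ha
    have hfa := hlt a (List.mem_toFinset.1 ha)
    obtain ⟨m, hm⟩ := ENat.ne_top_iff_exists.1 hfa.ne_top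
    rw [← hm, ENat.natCast_lt_natCast] at hfa
    simpa [← hm] using hfa
  calc l.length = l.toFinset.card := (List.toFinset_card_of_nodup hl).symm
    _ ≤ ((Finset.range n).image ((↑) : ℕ → ℕ∞)).card :=
      Finset.card_le_card_of_injOn f hmaps (by simpa using hinj)
    _ ≤ n := Finset.card_image_le.trans (Finset.card_range n).le

lemma IsDiWalk.take_idxOf_succ [DecidableEq V] {A : V → V → Prop} {u v x : V} {w : List V}
    (hw : IsDiWalk A u v w) (hx : x ∈ w) : IsDiWalk A u x (w.take (w.idxOf x + 1)) := by
  obtain ⟨hchain, hhead, -⟩ := hw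
  refine ⟨hchain.prefix (List.take_prefix _ _), ?_, ?_⟩
  · rw [List.head?_take, if_neg (Nat.succ_ne_zero _), hhead]
  · rw [List.getLast?_take, if_neg (Nat.succ_ne_zero _), Nat.add_sub_cancel, List.getElem?_idxOf hx]
    rfl

lemma walkLength_take_idxOf_succ [DecidableEq V] {w : List V} {x : V} (hx : x ∈ w) :
    walkLength (w.take (w.idxOf x + 1)) = w.idxOf x := by
  have := List.idxOf_lt_length_iff.2 hx
  simp only [walkLength, List.length_take]
  omega

lemma ddist_le_walkLength (A : V → V → Prop) {u v : V} {w : List V}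
    (hw : IsDiWalk A u v w) : ddist A u v ≤ walkLength w :=
  iInf₂_le w hw

lemma ddist_self (A : V → V → Prop) (s : V) : ddist A s s = 0 :=
  nonpos_iff_eq_zero.1 <| ddist_le_walkLength A (w := [s]) ⟨List.isChain_singleton _, rfl, rfl⟩

lemma exists_walk_of_ddist_eq (A : V → V → Prop) {u v : V} {n : ℕ}
    (h : ddist A u v = n) : ∃ w, IsDiWalk A u v w ∧ walkLength w = n := by
  have hlt : ddist A u v < n + 1 := by rw [h]; exact_mod_cast n.lt_succ_self
  simp only [ddist, iInf_lt_iff] at hlt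
  obtain ⟨w, hw, hlen⟩ := hlt
  have hge : (n : ℕ∞) ≤ walkLength w := h ▸ ddist_le_walkLength A hw
  exact ⟨w, hw, by norm_cast at hlen hge; omega⟩

lemma IsDiWalk.concat {A : V → V → Prop} {u v w : V} {l : List V}
    (hl : IsDiWalk A u v l) (hvw : A v w) : IsDiWalk A u w (l ++ [w]) := by
  obtain ⟨hchain, hhead, hlast⟩ := hl
  refine ⟨hchain.append (List.isChain_singleton w) ?_, ?_, List.getLast?_concat⟩
  · simp_all
  · rw [List.head?_append, hhead]; rfl

lemma walkLength_concat {l : List V} (hl : l ≠ []) (w : V) :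
    walkLength (l ++ [w]) = walkLength l + 1 := by
  have := List.length_pos_iff.2 hl
  simp only [walkLength, List.length_append, List.length_singleton]
  omega

lemma ddist_le_ddist_add_one_of_adj (A : V → V → Prop) (s : V) {u v : V} (huv : A u v) :
    ddist A s v ≤ ddist A s u + 1 := by
  induction hn : ddist A s u using ENat.recTopCoe with
  | top => simp
  | coe n =>
    obtain ⟨l, hl, hlen⟩ := exists_walk_of_ddist_eq A hn
    have hne : l ≠ [] := by rintro rfl; simp [IsDiWalk] at hl
    calc ddist A s v ≤ walkLength (l ++ [v]) := ddist_le_walkLength A (hl.concat huv)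
      _ = n + 1 := by rw [walkLength_concat hne, hlen]; push_cast; rfl

lemma IsDiWalk.ddist_lt_of_mem_take {A : V → V → Prop} {s t : V} {P : List V} {k p : ℕ}
    (hP : IsDiWalk A s t P) (hne : ∀ z ∈ P.take k, ddist A s z ≠ p) :
    ∀ z ∈ P.take k, ddist A s z < p := by
  have hhead : ∀ a ∈ (P.take k).head?, ddist A s a < p := by
    intro a ha
    have hs : a = s := by
      rw [List.head?_take] at ha
      split_ifs at ha
      · simp at ha
      · rw [hP.2.1, Option.mem_some_iff] at ha
        exact ha.symm
    have h0 := hne a (List.mem_of_mem_head? ha)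
    rw [hs, ddist_self] at h0 ⊢
    exact pos_of_ne_zero h0.symm
  exact (hP.1.prefix (List.take_prefix _ _)).forall_lt_of_forall_ne
    (fun _ _ => ddist_le_ddist_add_one_of_adj A s) hhead hne

theorem stmt4_general [DecidableEq V] (A : V → V → Prop) (s t : V)
    (P : List V) (hP : IsDiPath A s t P)
    (p : ℕ)
    (hpmin : ∀ q : ℕ, q < p →
      ¬ ∃ u ∈ P, ∃ v ∈ P, u ≠ v ∧ ddist A s u = (q : ℕ∞) ∧ ddist A s v = (q : ℕ∞))
    (x : V) (hxP : x ∈ P) (hxp : ddist A s x = (p : ℕ∞))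
    (hxfirst : ∀ z ∈ P.take (P.idxOf x), ddist A s z ≠ (p : ℕ∞)) :
    IsDiPath A s x (P.take (P.idxOf x + 1)) ∧
      walkLength (P.take (P.idxOf x + 1)) = p := by
  obtain ⟨hwalkP, hnodup⟩ := hP
  set k := P.idxOf x
  have hwalk : IsDiWalk A s x (P.take (k + 1)) := hwalkP.take_idxOf_succ hxP
  have hpk : p ≤ k := by
    have := ddist_le_walkLength A hwalk
    rwa [walkLength_take_idxOf_succ hxP, hxp, Nat.cast_le] at this
  have hbelow : ∀ z ∈ P.take k, ddist A s z < p := hwalkP.ddist_lt_of_mem_take hxfirst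
  have hinj : Set.InjOn (ddist A s) {z | z ∈ P.take k} := by
    intro u hu v hv huv
    by_contra hne
    obtain ⟨q, hq⟩ := ENat.ne_top_iff_exists.1 (hbelow u hu).ne_top
    have hqp : q < p := by exact_mod_cast hq ▸ hbelow u hu
    exact hpmin q hqp ⟨u, List.mem_of_mem_take hu, v, List.mem_of_mem_take hv, hne, hq.symm,
      huv ▸ hq.symm⟩
  have hkp : k ≤ p := by
    have := List.length_le_of_injOn_of_lt (hnodup.sublist (List.take_sublist k P)) hinj hbelow
    rwa [List.length_take_of_le (List.idxOf_le_length)] at this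
  exact ⟨⟨hwalk, hnodup.sublist (List.take_sublist _ _)⟩,
    (walkLength_take_idxOf_succ hxP).trans (le_antisymm hkp hpk)⟩

/-- for a non-shortest simple `s`-to-`t` path `P`, with `p` the
smallest index of a BFS layer containing at least two vertices of `P` and `x`
the first vertex of `P` in layer `p`, the prefix `P[s→x]` is a path from `s`
to `x` of length exactly `p`, i.e. a shortest `s`-to-`x` path. -/
theorem stmt4 [DecidableEq V] (A : V → V → Prop) (s t : V)
    (hfin : ddist A s t < ⊤) (P : List V) (hP : IsDiPath A s t P)
    (hlong : ddist A s t < (walkLength P : ℕ∞))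
    (p : ℕ)
    (hp : ∃ u ∈ P, ∃ v ∈ P, u ≠ v ∧ ddist A s u = (p : ℕ∞) ∧ ddist A s v = (p : ℕ∞))
    (hpmin : ∀ q : ℕ, q < p →
      ¬ ∃ u ∈ P, ∃ v ∈ P, u ≠ v ∧ ddist A s u = (q : ℕ∞) ∧ ddist A s v = (q : ℕ∞))
    (x : V) (hxP : x ∈ P) (hxp : ddist A s x = (p : ℕ∞))
    (hxfirst : ∀ z ∈ P.take (P.idxOf x), ddist A s z ≠ (p : ℕ∞)) :
    IsDiPath A s x (P.take (P.idxOf x + 1)) ∧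
      walkLength (P.take (P.idxOf x + 1)) = p :=
  stmt4_general A s t P hP p hpmin x hxP hxp hxfirst
end

section
/- Let G be a digraph and s, t vertices with dist_G(s,t) < ∞. Then there exists a simple s-to-t path in G of length strictly greater than dist_G(s,t) if and only if there exist a natural number p and distinct vertices x ≠ y with dist_G(s,x) = dist_G(s,y) = p, together with an x-to-y path P_1 and a y-to-t path P_2, both contained in the induced subgraph G_{≥p} on {v : dist_G(s,v) ≥ p}, such that P_1 and P_2 are internally vertex-disjoint. -/
/-!
Along a simple `s`-`t` path `P` longer than `dist(s, t)`, the layer `dist(s, ·)` starts at `0`,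
rises by at most one per arc and ends below the length of `P`. Hence `P` leaves some vertex `x`
of a layer `p`, never drops below `p` afterwards, and returns to layer `p` at a vertex `y`; the
pieces `x → y` and `y → t` of `P` are the two detour paths.
Conversely, a shortest `s`-`x` path stays in layers `< p` until it reaches `x`, so it can be
continued along `P₁` and then `P₂` (when `x = t`, a shortest `s`-`y` path along `P₂` alone); the
result is simple and longer than `dist(s, t) ≤ p + |P₂|`.
-/

variable {V : Type*}

variable {A : V → V → Prop} {s t u v x y z : V} {w w₁ w₂ : List V}

namespace IsDiWalk

lemma eq_cons (h : IsDiWalk A u v w) : w = u :: w.tail := by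
  obtain ⟨-, hu, -⟩ := h
  cases w with
  | nil => simp at hu
  | cons a l => simp_all

lemma ne_nil (h : IsDiWalk A u v w) : w ≠ [] := by
  rw [h.eq_cons]; exact List.cons_ne_nil _ _

lemma head_mem (h : IsDiWalk A u v w) : u ∈ w := by
  rw [h.eq_cons]; exact List.mem_cons_self

lemma getLast_eq (h : IsDiWalk A u v w) : w.getLast h.ne_nil = v := by
  simpa [List.getLast?_eq_some_getLast h.ne_nil] using h.2.2

lemma of_arc (huv : A u v) : IsDiWalk A u v [u, v] :=
  ⟨List.isChain_pair.mpr huv, rfl, rfl⟩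

lemma append (h₁ : IsDiWalk A u v w₁) (h₂ : IsDiWalk A v z w₂) :
    IsDiWalk A u z (w₁ ++ w₂.tail) := by
  obtain ⟨c₁, hu, hv⟩ := h₁
  have e₂ := h₂.eq_cons
  obtain ⟨c₂, -, hz⟩ := h₂
  rw [e₂] at c₂ hz
  generalize w₂.tail = r at c₂ hz ⊢
  refine ⟨c₁.append c₂.tail fun a ha b hb => ?_, ?_, ?_⟩
  · rw [hv, Option.mem_some_iff] at ha
    subst ha
    exact List.isChain_cons.mp c₂ |>.1 b hb
  · cases w₁ <;> simp_all
  · cases r <;> simp_all [List.getLast?_cons]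

lemma take (h : IsDiWalk A u v w) {k : ℕ} (hk : k < w.length) :
    IsDiWalk A u w[k] (w.take (k + 1)) := by
  refine ⟨h.1.take _, ?_, ?_⟩
  · rw [h.eq_cons]; simp
  · simp [List.getLast?_take, hk]

lemma drop (h : IsDiWalk A u v w) {k : ℕ} (hk : k < w.length) :
    IsDiWalk A w[k] v (w.drop k) := by
  refine ⟨h.1.drop _, by simp [hk], ?_⟩
  rw [List.getLast?_drop, if_neg (by omega), h.2.2]

lemma mem_cases (h : IsDiWalk A u v w) {a : V} (ha : a ∈ w) :
    a = u ∨ a = v ∨ a ∈ internalVerts w := by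
  rw [h.eq_cons, List.mem_cons] at ha
  rcases ha with rfl | ha
  · exact .inl rfl
  have hr : w.tail ≠ [] := List.ne_nil_of_mem ha
  rw [← List.dropLast_append_getLast hr, List.mem_append, List.mem_singleton,
    List.getLast_tail, h.getLast_eq] at ha
  exact .inr ha.symm

lemma walkLength_pos (h : IsDiWalk A u v w) (huv : u ≠ v) : 0 < walkLength w := by
  by_contra h0
  have hr : w.tail = [] := by
    rw [← List.length_eq_zero_iff, List.length_tail]
    simp only [walkLength, not_lt, Nat.le_zero] at h0
    exact h0
  have hv := h.2.2
  rw [h.eq_cons, hr] at hv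
  exact huv (Option.some_injective _ hv)

end IsDiWalk

lemma IsDiPath.notMem_tail (h : IsDiPath A u v w) : u ∉ w.tail := by
  have hnd := h.2
  rw [h.1.eq_cons, List.nodup_cons] at hnd
  exact hnd.1

lemma walkLength_append (h : w₁ ≠ []) :
    walkLength (w₁ ++ w₂.tail) = walkLength w₁ + walkLength w₂ := by
  have := List.length_pos_iff.mpr h
  simp only [walkLength, List.length_append, List.length_tail]
  omega

lemma ddist_le (h : IsDiWalk A u v w) : ddist A u v ≤ walkLength w :=
  iInf₂_le w h

lemma exists_isDiWalk_walkLength_eq_ddist (h : ddist A u v ≠ ⊤) :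
    ∃ w, IsDiWalk A u v w ∧ (walkLength w : ℕ∞) = ddist A u v := by
  rw [ddist, iInf_subtype'] at h ⊢
  have : Nonempty {w // IsDiWalk A u v w} := by
    by_contra hw
    rw [not_nonempty_iff] at hw
    exact h (iInf_of_empty _)
  obtain ⟨⟨w, hw⟩, hmin⟩ := ciInf_mem fun w : {w // IsDiWalk A u v w} ↦ (walkLength w.1 : ℕ∞)
  exact ⟨w, hw, hmin⟩

lemma ddist_le_add_walkLength (h : IsDiWalk A u v w) :
    ddist A s v ≤ ddist A s u + walkLength w := by
  conv_rhs => rw [ddist, ENat.iInf_add]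
  refine le_iInf fun w' ↦ ?_
  rw [ENat.iInf_add]
  refine le_iInf fun h' ↦ ?_
  rw [← Nat.cast_add, ← walkLength_append h'.ne_nil]
  exact ddist_le (h'.append h)

lemma IsDiWalk.ddist_getElem_le (h : IsDiWalk A s v w) {k : ℕ} (hk : k < w.length) :
    ddist A s w[k] ≤ k := by
  have := ddist_le (h.take hk)
  rwa [walkLength, List.length_take, min_eq_left (by omega), Nat.add_sub_cancel] at this

lemma IsDiWalk.ddist_getElem_of_ddist_eq (h : IsDiWalk A s v w)
    (hmin : ddist A s v = walkLength w) {k : ℕ} (hk : k < w.length) :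
    ddist A s w[k] = k := by
  refine le_antisymm (h.ddist_getElem_le hk) ?_
  have htri := hmin ▸ ddist_le_add_walkLength (s := s) (h.drop hk)
  simp only [walkLength, List.length_drop] at htri
  cases hd : ddist A s w[k] with
  | top => exact le_top
  | coe d =>
    rw [hd, ← Nat.cast_add, Nat.cast_le] at htri
    exact_mod_cast (by omega : k ≤ d)

lemma IsDiWalk.nodup_of_ddist_eq (h : IsDiWalk A s v w) (hmin : ddist A s v = walkLength w) :
    w.Nodup :=
  List.nodup_iff_injective_getElem.mpr fun i j hij ↦ Fin.ext <| by
    have := congrArg (ddist A s) hij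
    simp only [h.ddist_getElem_of_ddist_eq hmin i.2, h.ddist_getElem_of_ddist_eq hmin j.2,
      Nat.cast_inj] at this
    exact this

/-- A shortest path to `z` lies in `G_{<p}` except for its endpoint, so it meets `R` only in `z`. -/
lemma exists_isDiPath_walkLength_eq_add {p : ℕ} {R : List V} (hz : ddist A s z = p)
    (hR : IsDiPath A z v R) (hRp : InGeq A s p R) :
    ∃ P, IsDiPath A s v P ∧ walkLength P = p + walkLength R := by
  obtain ⟨Q, hQ, hQp⟩ := exists_isDiWalk_walkLength_eq_ddist (hz ▸ ENat.natCast_ne_top p)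
  rw [hz, Nat.cast_inj] at hQp
  have hmin : ddist A s z = walkLength Q := by rw [hz, hQp]
  refine ⟨Q ++ R.tail, ⟨hQ.append hR.1, ?_⟩, by rw [walkLength_append hQ.ne_nil, hQp]⟩
  refine List.nodup_append.mpr ⟨hQ.nodup_of_ddist_eq hmin, hR.2.sublist (List.tail_sublist R),
    fun a ha b hb hab ↦ ?_⟩
  subst hab
  obtain ⟨k, hk, rfl⟩ := List.getElem_of_mem ha
  have hpk := hRp _ (List.mem_of_mem_tail hb)
  rw [hQ.ddist_getElem_of_ddist_eq hmin hk, Nat.cast_le] at hpk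
  have hlast : Q[k] = z := by
    rw [← hQ.getLast_eq, List.getLast_eq_getElem]
    simp only [walkLength] at hQp
    congr 1
    omega
  exact hR.notMem_tail (hlast ▸ hb)

lemma internalVerts_subset_dropLast (w : List V) : internalVerts w ⊆ w.dropLast := by
  rw [internalVerts, ← List.tail_dropLast]
  exact List.tail_subset _

lemma internalVerts_subset_tail (w : List V) : internalVerts w ⊆ w.tail :=
  List.dropLast_subset _

lemma internallyDisjoint_append_singleton_cons {a b : List V} (h : (a ++ y :: b).Nodup) :
    InternallyDisjoint (a ++ [y]) (y :: b) := by
  obtain ⟨-, hyb, hab⟩ := List.nodup_append.mp h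
  refine ⟨fun c hc hc' ↦ ?_, fun c hc hc' ↦ ?_⟩
  · have hca := internalVerts_subset_dropLast _ hc
    rw [List.dropLast_concat] at hca
    exact hab c hca c hc' rfl
  · have hcb : c ∈ b := internalVerts_subset_tail _ hc
    rcases List.mem_append.mp hc' with hca | hcy
    · exact hab c hca c (List.mem_cons_of_mem y hcb) rfl
    · exact (List.nodup_cons.mp hyb).1 (List.mem_singleton.mp hcy ▸ hcb)

lemma List.Nodup.internallyDisjoint_take_drop (h : w.Nodup) {m : ℕ} (hm : m < w.length) :
    InternallyDisjoint (w.take (m + 1)) (w.drop m) := by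
  rw [List.take_add_one, List.getElem?_eq_getElem hm, Option.toList_some,
    List.drop_eq_getElem_cons hm]
  refine internallyDisjoint_append_singleton_cons ?_
  rwa [← List.drop_eq_getElem_cons hm, List.take_append_drop]

lemma IsDiPath.append_of_internallyDisjoint {P₁ P₂ : List V} (h₁ : IsDiPath A x y P₁)
    (h₂ : IsDiPath A y t P₂) (hd : InternallyDisjoint P₁ P₂) (hx : x ∉ P₂) :
    IsDiPath A x t (P₁ ++ P₂.tail) := by
  refine ⟨h₁.1.append h₂.1, List.nodup_append.mpr ⟨h₁.2, h₂.2.sublist (List.tail_sublist _),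
    fun a ha b hb hab ↦ ?_⟩⟩
  subst hab
  rcases h₁.1.mem_cases ha with rfl | rfl | ha
  · exact hx (List.mem_of_mem_tail hb)
  · exact h₂.notMem_tail hb
  · exact hd.1 a ha (List.mem_of_mem_tail hb)

lemma InternallyDisjoint.notMem {P₁ P₂ : List V} (hd : InternallyDisjoint P₁ P₂)
    (h₁ : IsDiWalk A x y P₁) (h₂ : IsDiWalk A y t P₂) (hxy : x ≠ y) (hxt : x ≠ t) :
    x ∉ P₂ := fun hx ↦ by
  rcases h₂.mem_cases hx with rfl | rfl | hx
  exacts [hxy rfl, hxt rfl, hd.2 x hx h₁.head_mem]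

lemma InGeq.append_tail {p : ℕ} {P₁ P₂ : List V} (h₁ : InGeq A s p P₁) (h₂ : InGeq A s p P₂) :
    InGeq A s p (P₁ ++ P₂.tail) := fun a ha ↦ by
  rcases List.mem_append.mp ha with ha | ha
  exacts [h₁ a ha, h₂ a (List.mem_of_mem_tail ha)]

lemma exists_lt_eq_forall_le_of_le_add_one {f : ℕ → ℕ} {l : ℕ}
    (hstep : ∀ k < l, f (k + 1) ≤ f k + 1) (h0 : ∀ k ≤ l, f 0 ≤ f k) (hl : f l < f 0 + l) :
    ∃ i j, i < j ∧ j ≤ l ∧ f i = f j ∧ ∀ k, i ≤ k → k ≤ l → f i ≤ f k := by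
  suffices ∀ n a, a + n = l → (∀ k, a ≤ k → k ≤ l → f a ≤ f k) → f l < f a + n →
      ∃ i j, i < j ∧ j ≤ l ∧ f i = f j ∧ ∀ k, i ≤ k → k ≤ l → f i ≤ f k from
    this l 0 (zero_add l) (fun k _ hk ↦ h0 k hk) hl
  -- either `f a` recurs after `a`, or `f` rises at `a` and `a + 1` is again a suffix minimum
  intro n
  induction n with
  | zero => intro a rfl _ hl; simp at hl
  | succ n ih =>
    intro a ha hmin hl
    by_cases hrev : ∃ j, a < j ∧ j ≤ l ∧ f a = f j
    · obtain ⟨j, haj, hjl, hj⟩ := hrev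
      exact ⟨a, j, haj, hjl, hj, hmin⟩
    simp only [not_exists, not_and] at hrev
    have hrise : ∀ k, a < k → k ≤ l → f a < f k := fun k hak hkl ↦
      lt_of_le_of_ne (hmin k hak.le hkl) (hrev k hak hkl)
    have hnext : f (a + 1) = f a + 1 :=
      le_antisymm (hstep a (by omega)) (hrise (a + 1) (by omega) (by omega))
    refine ih (a + 1) (by omega) (fun k hk hkl ↦ ?_) (by omega)
    have := hrise k (by omega) hkl
    omega

lemma exists_split_of_isDiPath_of_ddist_getElem_eq {p m : ℕ} {Q : List V}
    (hQ : IsDiPath A x t Q) (hQp : InGeq A s p Q) (hx : ddist A s x = p)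
    (hm0 : 0 < m) (hm : m < Q.length) (hy : ddist A s Q[m] = p) :
    ∃ (p : ℕ) (x y : V), x ≠ y ∧ ddist A s x = p ∧ ddist A s y = p ∧
      ∃ P₁ P₂ : List V,
        IsDiPath A x y P₁ ∧ InGeq A s p P₁ ∧
        IsDiPath A y t P₂ ∧ InGeq A s p P₂ ∧
        InternallyDisjoint P₁ P₂ := by
  have hxy : x ≠ Q[m] := by
    have hQ0 : Q[0] = x := Option.some_injective _ <| by
      rw [← List.getElem?_eq_getElem, ← List.head?_eq_getElem?]; exact hQ.1.2.1
    rw [← hQ0, Ne, hQ.2.getElem_inj_iff]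
    exact hm0.ne
  refine ⟨p, x, Q[m], hxy, hx, hy, Q.take (m + 1), Q.drop m,
    ⟨hQ.1.take hm, hQ.2.sublist (List.take_sublist _ _)⟩,
    fun a ha ↦ hQp a (List.mem_of_mem_take ha),
    ⟨hQ.1.drop hm, hQ.2.sublist (List.drop_sublist _ _)⟩,
    fun a ha ↦ hQp a (List.mem_of_mem_drop ha), hQ.2.internallyDisjoint_take_drop hm⟩

lemma exists_split_of_lt_walkLength {P : List V} (hP : IsDiPath A s t P)
    (hlong : ddist A s t < walkLength P) :
    ∃ (p : ℕ) (x y : V), x ≠ y ∧ ddist A s x = p ∧ ddist A s y = p ∧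
      ∃ P₁ P₂ : List V,
        IsDiPath A x y P₁ ∧ InGeq A s p P₁ ∧
        IsDiPath A y t P₂ ∧ InGeq A s p P₂ ∧
        InternallyDisjoint P₁ P₂ := by
  have hlen : walkLength P + 1 = P.length := by
    have := List.length_pos_iff.mpr hP.1.ne_nil
    simp only [walkLength]; omega
  -- `toNat` loses nothing: the `k`-th vertex of `P` is at distance at most `k`
  let f : ℕ → ℕ := fun k ↦ (ddist A s (P.getD k s)).toNat
  have hf : ∀ k (hk : k < P.length), ddist A s P[k] = f k := fun k hk ↦ by
    simp only [f, List.getD_eq_getElem _ _ hk]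
    exact (ENat.natCast_toNat (ne_top_of_le_ne_top (ENat.natCast_ne_top k)
      (hP.1.ddist_getElem_le hk))).symm
  have hf0 : f 0 = 0 := by
    have := hP.1.ddist_getElem_le (k := 0) (by omega)
    rwa [hf, Nat.cast_le, Nat.le_zero] at this
  have hstep : ∀ k < walkLength P, f (k + 1) ≤ f k + 1 := fun k hk ↦ by
    have harc : A P[k] P[k + 1] := List.isChain_iff_getElem.mp hP.1.1 k (by omega)
    have := ddist_le_add_walkLength (s := s) (IsDiWalk.of_arc harc)
    rw [hf k (by omega), hf (k + 1) (by omega)] at this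
    exact_mod_cast this
  have hft : ddist A s t = f (walkLength P) := by
    rw [← hf _ (by omega), ← hP.1.getLast_eq, List.getLast_eq_getElem]
    congr 2
  obtain ⟨i, j, hij, hjl, hfij, hmin⟩ := exists_lt_eq_forall_le_of_le_add_one hstep
    (fun k _ ↦ by rw [hf0]; exact Nat.zero_le _) (by rw [hf0, zero_add]; exact_mod_cast hft ▸ hlong)
  have hji : (P.drop i)[j - i]'(by simp; omega) = P[j] := by
    simp only [List.getElem_drop, Nat.add_sub_cancel' hij.le]
  refine exists_split_of_isDiPath_of_ddist_getElem_eq (x := P[i]) (p := f i) (m := j - i)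
    ⟨hP.1.drop (by omega), hP.2.sublist (List.drop_sublist _ _)⟩ (fun a ha ↦ ?_)
    (hf i (by omega)) (by omega) (by simp; omega) (by rw [hji, hf j (by omega), hfij])
  obtain ⟨m, hm, rfl⟩ := List.getElem_of_mem ha
  rw [List.length_drop] at hm
  rw [List.getElem_drop, hf _ (by omega), Nat.cast_le]
  exact hmin _ (by omega) (by omega)

lemma exists_lt_walkLength_of_split {p : ℕ} {P₁ P₂ : List V} (hxy : x ≠ y)
    (hx : ddist A s x = p) (hy : ddist A s y = p)
    (h₁ : IsDiPath A x y P₁) (h₁p : InGeq A s p P₁)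
    (h₂ : IsDiPath A y t P₂) (h₂p : InGeq A s p P₂) (hd : InternallyDisjoint P₁ P₂) :
    ∃ P, IsDiPath A s t P ∧ ddist A s t < walkLength P := by
  have hP₁ := h₁.1.walkLength_pos hxy
  by_cases hxt : x = t
  · subst hxt
    obtain ⟨P, hP, hlen⟩ := exists_isDiPath_walkLength_eq_add hy h₂ h₂p
    have hP₂ := h₂.1.walkLength_pos (Ne.symm hxy)
    exact ⟨P, hP, by rw [hx, hlen]; exact_mod_cast (by omega : p < p + walkLength P₂)⟩
  · obtain ⟨P, hP, hlen⟩ := exists_isDiPath_walkLength_eq_add hx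
      (h₁.append_of_internallyDisjoint h₂ hd (hd.notMem h₁.1 h₂.1 hxy hxt))
      (h₁p.append_tail h₂p)
    refine ⟨P, hP, lt_of_le_of_lt (ddist_le_add_walkLength h₂.1) ?_⟩
    rw [hy, hlen, walkLength_append h₁.1.ne_nil]
    exact_mod_cast (by omega : p + walkLength P₂ < p + (walkLength P₁ + walkLength P₂))

theorem stmt8_general (A : V → V → Prop) (s t : V) :
    (∃ P : List V, IsDiPath A s t P ∧ ddist A s t < (walkLength P : ℕ∞)) ↔
      ∃ (p : ℕ) (x y : V), x ≠ y ∧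
        ddist A s x = (p : ℕ∞) ∧ ddist A s y = (p : ℕ∞) ∧
        ∃ P₁ P₂ : List V,
          IsDiPath A x y P₁ ∧ InGeq A s p P₁ ∧
          IsDiPath A y t P₂ ∧ InGeq A s p P₂ ∧
          InternallyDisjoint P₁ P₂ :=
  ⟨fun ⟨_, hP, hlong⟩ ↦ exists_split_of_lt_walkLength hP hlong,
    fun ⟨_, _, _, hxy, hx, hy, _, _, h₁, h₁p, h₂, h₂p, hd⟩ ↦
      exists_lt_walkLength_of_split hxy hx hy h₁ h₁p h₂ h₂p hd⟩

/-- correctness of the reduction from Directed Detour to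
2-Disjoint-Detour-Paths: there is a simple `s`-to-`t` path longer than
`dist_G(s,t)` iff for some layer index `p` there are distinct `x ≠ y` in layer
`p` together with an `x`-to-`y` path and a `y`-to-`t` path, both contained in
`G_{≥p}`, that are internally vertex-disjoint. -/
theorem stmt8 (A : V → V → Prop) (s t : V) (hfin : ddist A s t < ⊤) :
    (∃ P : List V, IsDiPath A s t P ∧ ddist A s t < (walkLength P : ℕ∞)) ↔
      ∃ (p : ℕ) (x y : V), x ≠ y ∧
        ddist A s x = (p : ℕ∞) ∧ ddist A s y = (p : ℕ∞) ∧
        ∃ P₁ P₂ : List V,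
          IsDiPath A x y P₁ ∧ InGeq A s p P₁ ∧
          IsDiPath A y t P₂ ∧ InGeq A s p P₂ ∧
          InternallyDisjoint P₁ P₂ :=
  stmt8_general A s t
end
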